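/- arXiv:1704.00531 — 3 statements merged into one kernel-verified Lean document; each statement's English description precedes it below -/
import Mathlib

section
/- Let (X,d) be an unbounded metric space, p ∈ X, and r̃ a scaling sequence. The class α₀ = α₀(X,r̃) of all sequences x̃ ∈ X̃_{∞,r̃} with d̃_{r̃}(x̃) = 0 is a common point of all pretangent spaces Ω_{∞,r̃}^X (i.e., α₀ belongs to every maximal clique of G_{X,r̃}); in particular, the graph G_{X,r̃} is connected. -/
open Filter Topology

/-- A scaling sequence: a sequence of positive reals tending to infinity. -/
def ScalingSeq (r : ℕ → ℝ) : Prop :=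
  (∀ n, 0 < r n) ∧ Tendsto r atTop atTop

/-- `x ∈ X̃_{∞,r̃}`: the sequence `x` satisfies `d(x_n,p) → ∞` and the finite limit
`d̃_r̃(x̃) = lim d(x_n,p)/r_n` exists.  Here `d` is the distance function of the space. -/
def SeqAdm {Y : Type*} (d : Y → Y → ℝ) (p : Y) (r : ℕ → ℝ) (x : ℕ → Y) : Prop :=
  Tendsto (fun n => d (x n) p) atTop atTop ∧
  ∃ L : ℝ, Tendsto (fun n => d (x n) p / r n) atTop (𝓝 L)

/-- The equivalence `x̃ ≡ ỹ ⇔ lim d(x_n,y_n)/r_n = 0`. -/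
def SeqEquiv {Y : Type*} (d : Y → Y → ℝ) (r : ℕ → ℝ) (x y : ℕ → Y) : Prop :=
  Tendsto (fun n => d (x n) (y n) / r n) atTop (𝓝 0)

/-- Mutual stability: the limit `lim d(x_n,y_n)/r_n` exists (and is finite). -/
def MutStable {Y : Type*} (d : Y → Y → ℝ) (r : ℕ → ℝ) (x y : ℕ → Y) : Prop :=
  ∃ L : ℝ, Tendsto (fun n => d (x n) (y n) / r n) atTop (𝓝 L)

/-- A set of sequences representing a clique in the graph `G_{X,r̃}`: all members are
admissible, the set is a union of equivalence classes, and all members are pairwise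
mutually stable. -/
def IsCliqueSet {Y : Type*} (d : Y → Y → ℝ) (p : Y) (r : ℕ → ℝ) (C : Set (ℕ → Y)) : Prop :=
  (∀ x ∈ C, SeqAdm d p r x) ∧
  (∀ x ∈ C, ∀ y, SeqAdm d p r y → SeqEquiv d r x y → y ∈ C) ∧
  (∀ x ∈ C, ∀ y ∈ C, MutStable d r x y)

/-- A pretangent space `Ω^X_{∞,r̃}`, encoded as the (union of the) maximal clique of the
graph `G_{X,r̃}`. -/
def IsPretangent {Y : Type*} (d : Y → Y → ℝ) (p : Y) (r : ℕ → ℝ) (C : Set (ℕ → Y)) : Prop :=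
  IsCliqueSet d p r C ∧ ∀ D, IsCliqueSet d p r D → C ⊆ D → D = C

/-- The point `α₀ = α₀(X,r̃)`: the class of admissible sequences with `d̃_r̃(x̃) = 0`. -/
def alphaZero {Y : Type*} (d : Y → Y → ℝ) (p : Y) (r : ℕ → ℝ) : Set (ℕ → Y) :=
  {x | SeqAdm d p r x ∧ Tendsto (fun n => d (x n) p / r n) atTop (𝓝 0)}

/-! Points of `X` at distance about `√(r n)` from `p` escape to infinity, yet are negligible on the
scale `r n`; this gives an element of `α₀`. Sequences in `α₀` stay within `o(r n)` of the constant
sequence `p`, so by the triangle inequality they are mutually stable with every admissible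
sequence, and adjoining `α₀` to any clique keeps it a clique. -/

lemma exists_tendsto_atTop_eventually_comp_le (u : ℕ → ℝ) {s : ℕ → ℝ}
    (hs : Tendsto s atTop atTop) :
    ∃ f : ℕ → ℕ, Tendsto f atTop atTop ∧ ∀ᶠ n in atTop, u (f n) ≤ s n := by
  let P : ℕ → ℕ → Prop := fun n k => ∀ j ≤ k, u j ≤ s n
  have hP : ∀ k, ∀ᶠ n in atTop, P n k := fun k =>
    (eventually_all_finite (Set.finite_le_nat k)).2 fun j _ => hs.eventually_ge_atTop (u j)
  refine ⟨fun n => Nat.findGreatest (P n) n, tendsto_atTop.2 fun k => ?_, ?_⟩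
  · filter_upwards [hP k, eventually_ge_atTop k] with n hnk hkn
    exact Nat.le_findGreatest hkn hnk
  · filter_upwards [hP 0] with n hn0
    exact Nat.findGreatest_spec (Nat.zero_le n) hn0 _ le_rfl

lemma exists_le_dist_of_not_isBounded_univ {X : Type*} [PseudoMetricSpace X]
    (hX : ¬ Bornology.IsBounded (Set.univ : Set X)) (p : X) (R : ℝ) : ∃ y : X, R ≤ dist y p := by
  by_contra! h
  exact hX <| (Metric.isBounded_iff_subset_closedBall p).2
    ⟨R, fun y _ => Metric.mem_closedBall.2 (h y).le⟩

theorem alphaZero_nonempty {X : Type*} [PseudoMetricSpace X]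
    (hX : ¬ Bornology.IsBounded (Set.univ : Set X)) (p : X) {r : ℕ → ℝ}
    (hr : Tendsto r atTop atTop) : (alphaZero dist p r).Nonempty := by
  choose q hq using fun k : ℕ => exists_le_dist_of_not_isBounded_univ hX p k
  have hsqrt : Tendsto (fun n => √(r n)) atTop atTop := Real.tendsto_sqrt_atTop.comp hr
  obtain ⟨f, hf, hfr⟩ := exists_tendsto_atTop_eventually_comp_le (fun k => dist (q k) p) hsqrt
  have hfar : Tendsto (fun n => dist (q (f n)) p) atTop atTop :=
    tendsto_atTop_mono (fun n => hq (f n)) (tendsto_natCast_atTop_atTop.comp hf)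
  have hnear : Tendsto (fun n => dist (q (f n)) p / r n) atTop (𝓝 0) := by
    have hinv : Tendsto (fun n => √(r n) / r n) atTop (𝓝 0) := by
      simpa only [Real.sqrt_div_self', one_div, Pi.inv_def] using hsqrt.inv_tendsto_atTop
    refine squeeze_zero' ?_ ?_ hinv
    · filter_upwards [hr.eventually_ge_atTop 0] with n hn
      positivity
    · filter_upwards [hfr, hr.eventually_ge_atTop 0] with n hn hrn
      exact div_le_div_of_nonneg_right hn hrn
  exact ⟨fun n => q (f n), ⟨hfar, 0, hnear⟩, hnear⟩

section Stability

variable {X : Type*} [PseudoMetricSpace X] {r : ℕ → ℝ}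

theorem SeqEquiv.symm {x y : ℕ → X} (h : SeqEquiv dist r x y) : SeqEquiv dist r y x := by
  simpa only [SeqEquiv, dist_comm] using h

theorem MutStable.symm {x y : ℕ → X} (h : MutStable dist r x y) : MutStable dist r y x := by
  simpa only [MutStable, dist_comm] using h

theorem SeqEquiv.tendsto_dist_div (hr : ∀ n, 0 ≤ r n) {x y z : ℕ → X} {L : ℝ}
    (hyz : SeqEquiv dist r y z) (hxy : Tendsto (fun n => dist (x n) (y n) / r n) atTop (𝓝 L)) :
    Tendsto (fun n => dist (x n) (z n) / r n) atTop (𝓝 L) := by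
  have hdiff : Tendsto (fun n => dist (x n) (z n) / r n - dist (x n) (y n) / r n) atTop (𝓝 0) := by
    refine squeeze_zero_norm (fun n => ?_) hyz
    rw [← sub_div, Real.norm_eq_abs, abs_div, abs_of_nonneg (hr n)]
    refine div_le_div_of_nonneg_right ?_ (hr n)
    rw [dist_comm (x n) (z n), dist_comm (x n) (y n), dist_comm (y n) (z n)]
    exact abs_dist_sub_le (z n) (y n) (x n)
  simpa using hdiff.add hxy

theorem mutStable_of_mem_alphaZero (hr : ∀ n, 0 ≤ r n) {p : X} {x z : ℕ → X}
    (hx : SeqAdm dist p r x) (hz : z ∈ alphaZero dist p r) : MutStable dist r x z := by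
  obtain ⟨L, hL⟩ := hx.2
  exact ⟨L, SeqEquiv.tendsto_dist_div (y := fun _ => p) hr (SeqEquiv.symm hz.2) hL⟩

theorem mem_alphaZero_of_seqEquiv (hr : ∀ n, 0 ≤ r n) {p : X} {y z : ℕ → X}
    (hz : z ∈ alphaZero dist p r) (hy : SeqAdm dist p r y) (hzy : SeqEquiv dist r z y) :
    y ∈ alphaZero dist p r :=
  ⟨hy, SeqEquiv.symm (SeqEquiv.tendsto_dist_div (x := fun _ => p) hr hzy (SeqEquiv.symm hz.2))⟩

theorem IsCliqueSet.union_alphaZero (hr : ∀ n, 0 ≤ r n) {p : X} {C : Set (ℕ → X)}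
    (hC : IsCliqueSet dist p r C) : IsCliqueSet dist p r (C ∪ alphaZero dist p r) := by
  obtain ⟨hadm, hsat, hstable⟩ := hC
  refine ⟨?_, ?_, ?_⟩
  · rintro x (hx | hx)
    exacts [hadm x hx, hx.1]
  · rintro x (hx | hx) y hy hxy
    exacts [Or.inl (hsat x hx y hy hxy), Or.inr (mem_alphaZero_of_seqEquiv hr hx hy hxy)]
  · rintro x (hx | hx) y (hy | hy)
    · exact hstable x hx y hy
    · exact mutStable_of_mem_alphaZero hr (hadm x hx) hy
    · exact (mutStable_of_mem_alphaZero hr (hadm y hy) hx).symm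
    · exact mutStable_of_mem_alphaZero hr hx.1 hy

theorem IsPretangent.alphaZero_subset (hr : ∀ n, 0 ≤ r n) {p : X} {C : Set (ℕ → X)}
    (hC : IsPretangent dist p r C) : alphaZero dist p r ⊆ C := by
  rw [← hC.2 _ (hC.1.union_alphaZero hr) Set.subset_union_left]
  exact Set.subset_union_right

end Stability

/-- For an unbounded metric space `X`, `p ∈ X` and a scaling sequence
`r̃`, the class `α₀` is a (nonempty) common point of all pretangent spaces
`Ω^X_{∞,r̃}`, i.e. `α₀` belongs to every maximal clique of `G_{X,r̃}`; in particular
the vertex `α₀` is mutually stable with every vertex of `G_{X,r̃}`, so the graph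
`G_{X,r̃}` is connected. -/
theorem alphaZero_mem_all_pretangent {X : Type*} [MetricSpace X]
    (hX : ¬ Bornology.IsBounded (Set.univ : Set X)) (p : X)
    (r : ℕ → ℝ) (hr : ScalingSeq r) :
    (alphaZero dist p r).Nonempty ∧
    (∀ C : Set (ℕ → X), IsPretangent dist p r C → alphaZero dist p r ⊆ C) ∧
    (∀ x : ℕ → X, SeqAdm dist p r x → ∀ z ∈ alphaZero dist p r, MutStable dist r x z) := by
  have hr₀ : ∀ n, 0 ≤ r n := fun n => (hr.1 n).le
  exact ⟨alphaZero_nonempty hX p hr.2, fun C hC => hC.alphaZero_subset hr₀,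
    fun x hx z hz => mutStable_of_mem_alphaZero hr₀ hx hz⟩
end

section
/- Let (X,d) be an unbounded metric space, p ∈ X, and for every scaling sequence r̃ let α₀ be the equivalence class of all x̃ ∈ X̃_{∞,r̃} with d̃_{r̃}(x̃) = 0. Define F_2(x_1, x_2) := (min(d(x_1,p), d(x_2,p)) · d(x_1,x_2)) / (max(d(x_1,p), d(x_2,p)))^2 for (x_1,x_2) ≠ (p,p) and F_2(p,p) := 0. Then the following are equivalent: (i) for every scaling sequence r̃ the graph G_{X,r̃} is a star with center α₀; (ii) F_2(x_1, x_2) → 0 as x_1, x_2 → ∞. -/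
open Filter Topology

/-- The metric `ρ` of a pretangent space: `ρ(α,β) = lim d(x_n,y_n)/r_n`. -/
noncomputable def seqDist {Y : Type*} (d : Y → Y → ℝ) (r : ℕ → ℝ) (x y : ℕ → Y) : ℝ :=
  limUnder atTop (fun n => d (x n) (y n) / r n)

open scoped Classical

/-- The function `F₂` of the Corollary:
`F₂(x₁,x₂) = (min(d(x₁,p),d(x₂,p)) · d(x₁,x₂)) / (max(d(x₁,p),d(x₂,p)))²`
for `(x₁,x₂) ≠ (p,p)` and `F₂(p,p) = 0`. -/
noncomputable def F2 {X : Type*} [MetricSpace X] (p : X) (x₁ x₂ : X) : ℝ :=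
  if x₁ = p ∧ x₂ = p then 0
  else (min (dist x₁ p) (dist x₂ p) * dist x₁ x₂) / max (dist x₁ p) (dist x₂ p) ^ 2

/-!
Normalising by `r n`, `F₂ (x n) (y n)` is a continuous function of the limits `A`, `B`, `c` of
`d(x n, p) / r n`, `d(y n, p) / r n` and `d(x n, y n) / r n`, namely `min A B * c / max A B ^ 2`.
If `F₂ → 0` at infinity this forces `c = 0` whenever `A, B > 0`, so no two vertices other than
`α₀` are adjacent, while every vertex is adjacent to `α₀` because
`|d(x n, z n) - d(x n, p)| ≤ d(z n, p)`. Conversely, pairs with `F₂ ≥ ε` and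
`d(x n, p) ≤ d(y n, p) → ∞`, rescaled by `r n = d(y n, p)`, have both normalised distances in a
compact set away from `0`, and a convergent subsequence gives two adjacent vertices other than `α₀`.
-/

section PseudoMetric

variable {X : Type*} [PseudoMetricSpace X] {p : X} {r : ℕ → ℝ}

lemma notMem_alphaZero_of_tendsto {x : ℕ → X} {L : ℝ} (hL : L ≠ 0)
    (hx : Tendsto (fun n => dist (x n) p / r n) atTop (𝓝 L)) : x ∉ alphaZero dist p r :=
  fun hx0 => hL (tendsto_nhds_unique hx hx0.2)

lemma exists_pos_tendsto_of_notMem_alphaZero (hr : ∀ n, 0 ≤ r n) {x : ℕ → X}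
    (hx : SeqAdm dist p r x) (hx0 : x ∉ alphaZero dist p r) :
    ∃ L, 0 < L ∧ Tendsto (fun n => dist (x n) p / r n) atTop (𝓝 L) := by
  obtain ⟨L, hL⟩ := hx.2
  have hL0 : 0 ≤ L := ge_of_tendsto' hL fun n => div_nonneg dist_nonneg (hr n)
  refine ⟨L, hL0.lt_of_ne ?_, hL⟩
  rintro rfl
  exact hx0 ⟨hx, hL⟩

lemma tendsto_dist_div_of_tendsto_zero (hr : ∀ n, 0 ≤ r n) {x z : ℕ → X} {L : ℝ}
    (hx : Tendsto (fun n => dist (x n) p / r n) atTop (𝓝 L))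
    (hz : Tendsto (fun n => dist (z n) p / r n) atTop (𝓝 0)) :
    Tendsto (fun n => dist (x n) (z n) / r n) atTop (𝓝 L) := by
  have hdiff : Tendsto (fun n => dist (x n) (z n) / r n - dist (x n) p / r n) atTop (𝓝 0) := by
    refine squeeze_zero_norm (fun n => ?_) hz
    rw [Real.norm_eq_abs, ← sub_div, abs_div, abs_of_nonneg (hr n), dist_comm (x n) (z n),
      dist_comm (x n) p]
    exact div_le_div_of_nonneg_right (abs_dist_sub_le _ _ _) (hr n)
  simpa using hdiff.add hx

end PseudoMetric

section F2

variable {X : Type*} [MetricSpace X] {p : X}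

lemma F2_comm (p x y : X) : F2 p x y = F2 p y x := by
  simp only [F2, and_comm, min_comm, max_comm, dist_comm x y]

lemma F2_nonneg (p x y : X) : 0 ≤ F2 p x y := by
  unfold F2
  split_ifs <;> positivity

lemma F2_eq_div_mul_div {x : X} (y : X) {c : ℝ} (hc : 0 < c) (hx : x ≠ p) :
    F2 p x y = min (dist x p / c) (dist y p / c) * (dist x y / c) /
      max (dist x p / c) (dist y p / c) ^ 2 := by
  rw [F2, if_neg fun h => hx h.1, min_div_div_right hc.le, max_div_div_right hc.le]
  field_simp

lemma F2_eq_mul_of_dist_le {x y : X} (hx : x ≠ p) (hxy : dist x p ≤ dist y p) :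
    F2 p x y = dist x p / dist y p * (dist x y / dist y p) := by
  have hy : 0 < dist y p := (dist_pos.2 hx).trans_le hxy
  rw [F2_eq_div_mul_div y hy hx, div_self hy.ne', min_eq_left ((div_le_one hy).2 hxy),
    max_eq_right ((div_le_one hy).2 hxy), one_pow, div_one]

lemma tendsto_F2 {r : ℕ → ℝ} (hr : ∀ n, 0 < r n) {x y : ℕ → X} {A B c : ℝ} (hA : 0 < A)
    (hxA : Tendsto (fun n => dist (x n) p / r n) atTop (𝓝 A))
    (hyB : Tendsto (fun n => dist (y n) p / r n) atTop (𝓝 B))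
    (hc : Tendsto (fun n => dist (x n) (y n) / r n) atTop (𝓝 c)) :
    Tendsto (fun n => F2 p (x n) (y n)) atTop (𝓝 (min A B * c / max A B ^ 2)) := by
  have hxp : ∀ᶠ n in atTop, x n ≠ p := by
    filter_upwards [hxA.eventually (eventually_gt_nhds hA)] with n hn hxn
    simp [hxn] at hn
  refine (((hxA.min hyB).mul hc).div ((hxA.max hyB).pow 2)
    (pow_pos (lt_max_of_lt_left hA) 2).ne').congr' ?_
  filter_upwards [hxp] with n hn
  exact (F2_eq_div_mul_div (y n) (hr n) hn).symm

lemma tendsto_F2_zero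
    (hF : ∀ ε > (0 : ℝ), ∃ M : ℝ, ∀ x₁ x₂ : X, M ≤ dist x₁ p → M ≤ dist x₂ p → F2 p x₁ x₂ < ε)
    {x y : ℕ → X} (hx : Tendsto (fun n => dist (x n) p) atTop atTop)
    (hy : Tendsto (fun n => dist (y n) p) atTop atTop) :
    Tendsto (fun n => F2 p (x n) (y n)) atTop (𝓝 0) := by
  refine tendsto_order.2 ⟨fun a ha => .of_forall fun n => ha.trans_le (F2_nonneg _ _ _),
    fun ε hε => ?_⟩
  obtain ⟨M, hM⟩ := hF ε hε
  filter_upwards [hx.eventually_ge_atTop M, hy.eventually_ge_atTop M] with n hxn hyn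
  exact hM _ _ hxn hyn

lemma not_mutStable_of_tendsto_F2_zero
    (hF : ∀ ε > (0 : ℝ), ∃ M : ℝ, ∀ x₁ x₂ : X, M ≤ dist x₁ p → M ≤ dist x₂ p → F2 p x₁ x₂ < ε)
    {r : ℕ → ℝ} (hr : ∀ n, 0 < r n) {x y : ℕ → X} (hx : SeqAdm dist p r x)
    (hy : SeqAdm dist p r y) (hx0 : x ∉ alphaZero dist p r) (hy0 : y ∉ alphaZero dist p r)
    (hxy : ¬ SeqEquiv dist r x y) : ¬ MutStable dist r x y := by
  rintro ⟨c, hc⟩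
  obtain ⟨A, hA, hxA⟩ := exists_pos_tendsto_of_notMem_alphaZero (fun n => (hr n).le) hx hx0
  obtain ⟨B, hB, hyB⟩ := exists_pos_tendsto_of_notMem_alphaZero (fun n => (hr n).le) hy hy0
  have hlim : min A B * c / max A B ^ 2 = 0 :=
    tendsto_nhds_unique (tendsto_F2 hr hA hxA hyB hc) (tendsto_F2_zero hF hx.1 hy.1)
  have hc0 : c = 0 := by
    simpa [(lt_min hA hB).ne', (lt_max_of_lt_left hA).ne'] using hlim
  exact hxy (by rwa [hc0] at hc)

lemma exists_seq_le_F2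
    (hF : ¬ ∀ ε > (0 : ℝ), ∃ M : ℝ, ∀ x₁ x₂ : X, M ≤ dist x₁ p → M ≤ dist x₂ p →
      F2 p x₁ x₂ < ε) :
    ∃ ε > 0, ∃ x y : ℕ → X, (∀ n, x n ≠ p) ∧ Tendsto (fun n => dist (x n) p) atTop atTop ∧
      (∀ n, dist (x n) p ≤ dist (y n) p) ∧ ∀ n, ε ≤ F2 p (x n) (y n) := by
  push Not at hF
  obtain ⟨ε, hε, hF⟩ := hF
  have hpair : ∀ n : ℕ, ∃ u v : X, (n : ℝ) + 1 ≤ dist u p ∧ dist u p ≤ dist v p ∧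
      ε ≤ F2 p u v := by
    intro n
    obtain ⟨a, b, ha, hb, hab⟩ := hF ((n : ℝ) + 1)
    rcases le_total (dist a p) (dist b p) with hle | hle
    · exact ⟨a, b, ha, hle, hab⟩
    · exact ⟨b, a, hb, hle, F2_comm p a b ▸ hab⟩
  choose x y hx hxy hxyF using hpair
  refine ⟨ε, hε, x, y, fun n => dist_pos.1 ((Nat.cast_add_one_pos n).trans_le (hx n)), ?_,
    hxy, hxyF⟩
  exact tendsto_atTop_mono hx (tendsto_natCast_atTop_atTop.atTop_add tendsto_const_nhds)

lemma exists_scalingSeq_mutStable_of_le_F2 {ε : ℝ} (hε : 0 < ε) {x y : ℕ → X}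
    (hxp : ∀ n, x n ≠ p) (hx : Tendsto (fun n => dist (x n) p) atTop atTop)
    (hxy : ∀ n, dist (x n) p ≤ dist (y n) p) (hF : ∀ n, ε ≤ F2 p (x n) (y n)) :
    ∃ r, ScalingSeq r ∧ ∃ x' y' : ℕ → X, SeqAdm dist p r x' ∧ SeqAdm dist p r y' ∧
      x' ∉ alphaZero dist p r ∧ y' ∉ alphaZero dist p r ∧ ¬ SeqEquiv dist r x' y' ∧
      MutStable dist r x' y' := by
  set r : ℕ → ℝ := fun n => dist (y n) p
  have hr : ∀ n, 0 < r n := fun n => (dist_pos.2 (hxp n)).trans_le (hxy n)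
  have hrtop : Tendsto r atTop atTop := tendsto_atTop_mono hxy hx
  have hmem : ∀ n, (dist (x n) p / r n, dist (x n) (y n) / r n) ∈ Set.Icc (ε / 2) 1 ×ˢ Set.Icc ε 2 := by
    intro n
    have ht : dist (x n) p / r n ≤ 1 := (div_le_one (hr n)).2 (hxy n)
    have hs : dist (x n) (y n) / r n ≤ 2 := by
      rw [div_le_iff₀ (hr n)]
      linarith [dist_triangle_right (x n) (y n) p, hxy n]
    have hts : ε ≤ dist (x n) p / r n * (dist (x n) (y n) / r n) :=
      F2_eq_mul_of_dist_le (hxp n) (hxy n) ▸ hF n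
    have ht0 : 0 ≤ dist (x n) p / r n := div_nonneg dist_nonneg (hr n).le
    have hs0 : 0 ≤ dist (x n) (y n) / r n := div_nonneg dist_nonneg (hr n).le
    exact ⟨⟨by nlinarith, ht⟩, ⟨by nlinarith, hs⟩⟩
  obtain ⟨⟨T, S⟩, ⟨hT, hS⟩, φ, hφ, hlim⟩ :=
    (isCompact_Icc.prod isCompact_Icc).tendsto_subseq hmem
  have hφtop := hφ.tendsto_atTop
  have hyφ : Tendsto (fun n => dist (y (φ n)) p / r (φ n)) atTop (𝓝 1) :=
    tendsto_const_nhds.congr fun n => (div_self (hr (φ n)).ne').symm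
  refine ⟨r ∘ φ, ⟨fun n => hr (φ n), hrtop.comp hφtop⟩, x ∘ φ, y ∘ φ,
    ⟨hx.comp hφtop, T, hlim.fst_nhds⟩, ⟨hrtop.comp hφtop, 1, hyφ⟩,
    notMem_alphaZero_of_tendsto (by linarith [hT.1]) hlim.fst_nhds,
    notMem_alphaZero_of_tendsto one_ne_zero hyφ,
    fun h => ?_, S, hlim.snd_nhds⟩
  linarith [hS.1, tendsto_nhds_unique hlim.snd_nhds h]

end F2

theorem star_graph_iff_general {X : Type*} [MetricSpace X] (p : X) :
    (∀ r : ℕ → ℝ, ScalingSeq r →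
      (∀ x : ℕ → X, SeqAdm dist p r x → x ∉ alphaZero dist p r →
        ∀ z ∈ alphaZero dist p r, MutStable dist r x z ∧ ¬ SeqEquiv dist r x z) ∧
      (∀ x y : ℕ → X, SeqAdm dist p r x → SeqAdm dist p r y →
        x ∉ alphaZero dist p r → y ∉ alphaZero dist p r → ¬ SeqEquiv dist r x y →
        ¬ MutStable dist r x y)) ↔
    (∀ ε > (0 : ℝ), ∃ M : ℝ, ∀ x₁ x₂ : X, M ≤ dist x₁ p → M ≤ dist x₂ p →
      F2 p x₁ x₂ < ε) := by
  constructor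
  · intro hstar
    by_contra hF
    obtain ⟨ε, hε, x, y, hxp, hx, hxy, hxyF⟩ := exists_seq_le_F2 hF
    obtain ⟨r, hr, x', y', hx', hy', hx'0, hy'0, hne, hst⟩ :=
      exists_scalingSeq_mutStable_of_le_F2 hε hxp hx hxy hxyF
    exact (hstar r hr).2 x' y' hx' hy' hx'0 hy'0 hne hst
  · intro hF r hr
    have hr0 : ∀ n, 0 ≤ r n := fun n => (hr.1 n).le
    refine ⟨fun x hx hx0 z hz => ?_, fun x y => not_mutStable_of_tendsto_F2_zero hF hr.1⟩
    obtain ⟨L, hL, hxL⟩ := exists_pos_tendsto_of_notMem_alphaZero hr0 hx hx0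
    have hxz := tendsto_dist_div_of_tendsto_zero hr0 hxL hz.2
    exact ⟨⟨L, hxz⟩, fun h => hL.ne' (tendsto_nhds_unique hxz h)⟩

/-- **Corollary.** Let `(X,d)` be an unbounded metric space, `p ∈ X`, and
for every scaling sequence `r̃` let `α₀` be the class of all `x̃ ∈ X̃_{∞,r̃}` with
`d̃_r̃(x̃) = 0`.  The following are equivalent:
(i) for every scaling sequence `r̃` the graph `G_{X,r̃}` is a star with center `α₀`
(every vertex distinct from `α₀` is adjacent to `α₀`, and there are no other edges);
(ii) `F₂(x₁,x₂) → 0` as `x₁, x₂ → ∞`. -/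
theorem star_graph_iff {X : Type*} [MetricSpace X]
    (hX : ¬ Bornology.IsBounded (Set.univ : Set X)) (p : X) :
    (∀ r : ℕ → ℝ, ScalingSeq r →
      (∀ x : ℕ → X, SeqAdm dist p r x → x ∉ alphaZero dist p r →
        ∀ z ∈ alphaZero dist p r, MutStable dist r x z ∧ ¬ SeqEquiv dist r x z) ∧
      (∀ x y : ℕ → X, SeqAdm dist p r x → SeqAdm dist p r y →
        x ∉ alphaZero dist p r → y ∉ alphaZero dist p r → ¬ SeqEquiv dist r x y →
        ¬ MutStable dist r x y)) ↔
    (∀ ε > (0 : ℝ), ∃ M : ℝ, ∀ x₁ x₂ : X, M ≤ dist x₁ p → M ≤ dist x₂ p →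
      F2 p x₁ x₂ < ε) :=
  star_graph_iff_general p
end

section
/- There exists a set E ⊆ ℝ⁺ which is strongly porous at infinity but not completely strongly porous at infinity. -/
/-!
Take `E = ⋃ₖ [xₖ, xₖ³]` with `xₖ = 2 ^ 4 ^ k`, so that `xₖ₊₁ = xₖ⁴`. The gaps `(xₖ³, xₖ⁴)` have
relative length `1 - 1/xₖ → 1`, so `E` is strongly porous at infinity. The points `xₖ²` of `E`
sit in the geometric middle of the blocks: a gap component whose left endpoint is within fixed
constant factors of `xₖ²` would, for large `k`, start strictly inside the block `[xₖ, xₖ³]`,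
which is impossible.
-/

open Filter Topology

/-- `l(∞,h,E)`: the length of the longest interval contained in `[0,h] \ E`. -/
noncomputable def gapLen (E : Set ℝ) (h : ℝ) : ℝ :=
  sSup {d : ℝ | ∃ a b : ℝ, a ≤ b ∧ d = b - a ∧ Set.Ioo a b ⊆ Set.Icc 0 h \ E}

/-- The porosity of `E ⊆ ℝ⁺` at infinity: `p(E,∞) = limsup_{h→∞} l(∞,h,E)/h`. -/
noncomputable def porosityAtInfty (E : Set ℝ) : ℝ :=
  Filter.limsup (fun h => gapLen E h / h) atTop

/-- `E` is strongly porous at infinity if `p(E,∞) = 1`. -/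
def StronglyPorousAtInfty (E : Set ℝ) : Prop :=
  porosityAtInfty E = 1

/-- A sequence of reals is eventually increasing if `τ_{n+1} ≥ τ_n` for all
sufficiently large `n`. -/
def EventuallyIncr (τ : ℕ → ℝ) : Prop :=
  ∃ N : ℕ, ∀ n ≥ N, τ n ≤ τ (n + 1)

/-- `τ̃ ∈ Ẽ^i_∞`: an eventually increasing sequence in `E` tending to infinity. -/
def MemEInfty (E : Set ℝ) (τ : ℕ → ℝ) : Prop :=
  (∀ n, τ n ∈ E) ∧ EventuallyIncr τ ∧ Tendsto τ atTop atTop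

/-- `(a,b)` is a connected component of `Int(ℝ⁺ \ E)`. -/
def IsGapComponent (E : Set ℝ) (a b : ℝ) : Prop :=
  a < b ∧ Set.Ioo a b ⊆ interior (Set.Ici (0:ℝ) \ E) ∧
  a ∉ interior (Set.Ici (0:ℝ) \ E) ∧ b ∉ interior (Set.Ici (0:ℝ) \ E)

/-- `((aₙ,bₙ)) ∈ Ĩ^i_E`: every `(aₙ,bₙ)` is a connected component of `Int(ℝ⁺ \ E)`,
`(aₙ)` is eventually increasing, `aₙ → ∞` and `(bₙ-aₙ)/bₙ → 1`. -/
def MemIEi (E : Set ℝ) (a b : ℕ → ℝ) : Prop :=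
  (∀ n, IsGapComponent E (a n) (b n)) ∧ EventuallyIncr a ∧
  Tendsto a atTop atTop ∧ Tendsto (fun n => (b n - a n) / b n) atTop (𝓝 1)

/-- `ã ≍ γ̃`: there are constants `c₁, c₂ > 0` with `c₁ aₙ < γₙ < c₂ aₙ` for all `n`. -/
def BiComparable (a γ : ℕ → ℝ) : Prop :=
  ∃ c₁ c₂ : ℝ, 0 < c₁ ∧ 0 < c₂ ∧ ∀ n, c₁ * a n < γ n ∧ γ n < c₂ * a n

/-- `E` is `τ̃`-strongly porous at infinity if there is `((aₙ,bₙ)) ∈ Ĩ^i_E` with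
`τ̃ ≍ ã`. -/
def TauStronglyPorousAtInfty (E : Set ℝ) (τ : ℕ → ℝ) : Prop :=
  ∃ a b : ℕ → ℝ, MemIEi E a b ∧ BiComparable τ a

/-- `E` is completely strongly porous at infinity if it is `τ̃`-strongly porous at
infinity for every `τ̃ ∈ Ẽ^i_∞`. -/
def CompletelyStronglyPorousAtInfty (E : Set ℝ) : Prop :=
  ∀ τ : ℕ → ℝ, MemEInfty E τ → TauStronglyPorousAtInfty E τ

/-- `E` is `ω`-strongly porous at infinity if every `τ̃ ∈ Ẽ^i_∞` has a subsequence
`τ̃'` for which `E` is `τ̃'`-strongly porous at infinity. -/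
def OmegaStronglyPorousAtInfty (E : Set ℝ) : Prop :=
  ∀ τ : ℕ → ℝ, MemEInfty E τ →
    ∃ φ : ℕ → ℕ, StrictMono φ ∧ TauStronglyPorousAtInfty E (τ ∘ φ)

open Set

section GapLength

variable {E : Set ℝ} {g h : ℝ}

lemma le_of_mem_gapLenSet (hh : 0 ≤ h) {d : ℝ}
    (hd : d ∈ {d : ℝ | ∃ a b : ℝ, a ≤ b ∧ d = b - a ∧ Ioo a b ⊆ Icc 0 h \ E}) : d ≤ h := by
  obtain ⟨a, b, hab, rfl, hsub⟩ := hd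
  rcases hab.eq_or_lt with rfl | hlt
  · simpa using hh
  · have hIcc : Icc a b ⊆ Icc 0 h := by
      simpa [closure_Ioo hlt.ne] using closure_minimal (hsub.trans sdiff_subset) isClosed_Icc
    have := (Icc_subset_Icc_iff hab).1 hIcc
    linarith [this.1, this.2]

lemma gapLen_le (hh : 0 ≤ h) : gapLen E h ≤ h :=
  Real.sSup_le (fun _ => le_of_mem_gapLenSet hh) hh

lemma gapLen_nonneg (hh : 0 ≤ h) : 0 ≤ gapLen E h :=
  le_csSup ⟨h, fun _ => le_of_mem_gapLenSet hh⟩ ⟨0, 0, le_rfl, by norm_num, by simp⟩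

lemma sub_le_gapLen (hg : 0 ≤ g) (hgh : g ≤ h) (hgap : Ioo g h ⊆ Eᶜ) : h - g ≤ gapLen E h :=
  le_csSup ⟨h, fun _ => le_of_mem_gapLenSet (hg.trans hgh)⟩
    ⟨g, h, hgh, rfl, fun _ hz => ⟨⟨hg.trans hz.1.le, hz.2.le⟩, hgap hz⟩⟩

lemma stronglyPorousAtInfty_of_gaps {g h : ℕ → ℝ} (hg : ∀ k, 0 ≤ g k) (hgh : ∀ k, g k ≤ h k)
    (hgap : ∀ k, Ioo (g k) (h k) ⊆ Eᶜ) (hh : Tendsto h atTop atTop)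
    (hratio : Tendsto (fun k => g k / h k) atTop (𝓝 0)) : StronglyPorousAtInfty E := by
  set f : ℝ → ℝ := fun t => gapLen E t / t
  have hf_le : ∀ᶠ t in atTop, f t ≤ 1 := by
    filter_upwards [eventually_gt_atTop 0] with t ht
    exact div_le_one_of_le₀ (gapLen_le ht.le) ht.le
  have hf_nonneg : ∀ᶠ t in atTop, 0 ≤ f t := by
    filter_upwards [eventually_gt_atTop 0] with t ht
    exact div_nonneg (gapLen_nonneg ht.le) ht.le
  have hf_comp : Tendsto (f ∘ h) atTop (𝓝 1) := by
    have hlow : Tendsto (fun k => 1 - g k / h k) atTop (𝓝 1) := by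
      simpa using hratio.const_sub 1
    refine tendsto_of_tendsto_of_tendsto_of_le_of_le' hlow tendsto_const_nhds ?_
      (hh.eventually hf_le)
    filter_upwards [hh.eventually_gt_atTop 0] with k hk
    rw [one_sub_div hk.ne']
    exact div_le_div_of_nonneg_right (sub_le_gapLen (hg k) (hgh k) (hgap k)) hk.le
  refine le_antisymm (limsup_le_of_le (isCoboundedUnder_le_of_eventually_le _ hf_nonneg) hf_le) ?_
  calc (1 : ℝ) = limsup (f ∘ h) atTop := hf_comp.limsup_eq.symm
    _ ≤ limsup f atTop :=
      hh.limsup_comp_le_limsup hf_comp.isCoboundedUnder_le (isBoundedUnder_of_eventually_le hf_le)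

end GapLength

lemma IsGapComponent.notMem_Ico {E : Set ℝ} {a b u v : ℝ} (hab : IsGapComponent E a b)
    (huv : Icc u v ⊆ E) : a ∉ Ico u v := by
  rintro ⟨hua, hav⟩
  obtain ⟨z, haz, hzb⟩ := exists_between (lt_min hab.1 hav)
  have hzE : z ∉ E := (interior_subset (hab.2.1 ⟨haz, hzb.trans_le (min_le_left _ _)⟩)).2
  exact hzE (huv ⟨hua.trans haz.le, (hzb.trans_le (min_le_right _ _)).le⟩)

def blockBase (k : ℕ) : ℝ := 2 ^ 4 ^ k

def blockSet : Set ℝ := ⋃ k, Icc (blockBase k) (blockBase k ^ 3)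

lemma one_lt_blockBase (k : ℕ) : 1 < blockBase k :=
  one_lt_pow₀ one_lt_two (by positivity)

lemma blockBase_pos (k : ℕ) : 0 < blockBase k :=
  zero_lt_one.trans (one_lt_blockBase k)

lemma blockBase_succ (k : ℕ) : blockBase (k + 1) = blockBase k ^ 4 := by
  rw [blockBase, blockBase, pow_succ, pow_mul]

lemma blockBase_strictMono : StrictMono blockBase := fun _ _ hjk =>
  pow_lt_pow_right₀ one_lt_two (Nat.pow_lt_pow_right (by norm_num) hjk)

lemma tendsto_blockBase : Tendsto blockBase atTop atTop :=
  (tendsto_pow_atTop_atTop_of_one_lt one_lt_two).comp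
    (tendsto_pow_atTop_atTop_of_one_lt (by norm_num : 1 < 4))

lemma blockSet_subset_Ici : blockSet ⊆ Ici 0 := by
  intro z hz
  obtain ⟨k, hk, -⟩ := mem_iUnion.1 hz
  exact (blockBase_pos k).le.trans hk

lemma Ioo_blockBase_subset_compl (k : ℕ) :
    Ioo (blockBase k ^ 3) (blockBase (k + 1)) ⊆ blockSetᶜ := by
  rintro z ⟨hkz, hzk⟩ hz
  obtain ⟨j, hjz, hzj⟩ := mem_iUnion.1 hz
  rcases le_or_gt j k with hjk | hkj
  · have := pow_le_pow_left₀ (blockBase_pos j).le (blockBase_strictMono.monotone hjk) 3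
    linarith
  · have := blockBase_strictMono.monotone (Nat.succ_le_of_lt hkj)
    linarith

lemma stronglyPorousAtInfty_blockSet : StronglyPorousAtInfty blockSet := by
  refine stronglyPorousAtInfty_of_gaps (fun k => (pow_pos (blockBase_pos k) 3).le)
    (fun k => ?_) Ioo_blockBase_subset_compl (tendsto_blockBase.comp (tendsto_add_atTop_nat 1)) ?_
  · rw [blockBase_succ]
    exact pow_le_pow_right₀ (one_lt_blockBase k).le (by norm_num)
  · refine tendsto_inv_atTop_zero.comp tendsto_blockBase |>.congr fun k => ?_
    have := (blockBase_pos k).ne'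
    simp only [Function.comp_apply, blockBase_succ]
    field_simp

lemma memEInfty_blockSet_sq : MemEInfty blockSet (fun k => blockBase k ^ 2) := by
  refine ⟨fun k => mem_iUnion.2 ⟨k, ?_, ?_⟩, ⟨0, fun k _ => ?_⟩,
    (tendsto_pow_atTop two_ne_zero).comp tendsto_blockBase⟩
  · exact le_self_pow₀ (one_lt_blockBase k).le two_ne_zero
  · exact pow_le_pow_right₀ (one_lt_blockBase k).le (by norm_num)
  · exact pow_le_pow_left₀ (blockBase_pos k).le (blockBase_strictMono.monotone k.le_succ) 2

lemma not_tauStronglyPorousAtInfty_blockSet_sq :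
    ¬ TauStronglyPorousAtInfty blockSet (fun k => blockBase k ^ 2) := by
  rintro ⟨a, b, ⟨hcomp, -⟩, c₁, c₂, hc₁, -, hcmp⟩
  obtain ⟨n, hn⟩ := (tendsto_blockBase.eventually_gt_atTop (max c₂ c₁⁻¹)).exists
  have hx := blockBase_pos n
  have hc₁x : 1 < c₁ * blockBase n :=
    (inv_lt_iff_one_lt_mul₀' hc₁).1 ((le_max_right _ _).trans_lt hn)
  have hc₂x : c₂ < blockBase n := (le_max_left _ _).trans_lt hn
  obtain ⟨hlow, hup⟩ := hcmp n
  dsimp only at hlow hup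
  refine (hcomp n).notMem_Ico (subset_iUnion (fun k => Icc (blockBase k) (blockBase k ^ 3)) n)
    ⟨?_, ?_⟩
  · nlinarith
  · nlinarith

/-- There exists a set `E ⊆ ℝ⁺` which is strongly porous at infinity
but not completely strongly porous at infinity. -/
theorem exists_stronglyPorous_not_completelyStronglyPorous :
    ∃ E : Set ℝ, E ⊆ Set.Ici 0 ∧ StronglyPorousAtInfty E ∧
      ¬ CompletelyStronglyPorousAtInfty E :=
  ⟨blockSet, blockSet_subset_Ici, stronglyPorousAtInfty_blockSet,
    fun h => not_tauStronglyPorousAtInfty_blockSet_sq (h _ memEInfty_blockSet_sq)⟩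
end
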